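/- arXiv:1612.09069 — 2 statements merged into one kernel-verified Lean document; each statement's English description precedes it below -/
import Mathlib

section
/- Let v ∈ E, set z = v − η·∇f(v), let x̂ be a global minimizer of h(w) = (1/2)·‖w − z‖² + η·g(w), and let x⁺ ∈ E satisfy h(x⁺) ≤ h(x̂) + ε for some ε ≥ 0 (an ε-inexact proximal step at v). Then F(x⁺) ≤ F(v) − ((ρ − L)/2)·‖x⁺ − v‖² + ρ·ε. -/
/-!
The descent lemma bounds `f x⁺` by the linearization of `f` at `v` plus `(L/2)‖x⁺ - v‖²`.
Since `x̂` is optimal, `x⁺` is `ε`-optimal against the competitor `v` as well; expanding the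
square around `z = v - η ∇f(v)` turns this into
`⟪∇f(v), x⁺ - v⟫ + g x⁺ ≤ g v - (ρ/2)‖x⁺ - v‖² + ρ ε`. Adding the two bounds gives the claim.
-/

open InnerProductSpace

theorem le_add_fderiv_add_sq_of_lipschitz {E : Type*} [NormedAddCommGroup E] [NormedSpace ℝ E]
    {f : E → ℝ} {f' : E → E →L[ℝ] ℝ} {L : ℝ} (hf : ∀ x, HasFDerivAt f (f' x) x)
    (hlip : ∀ x y, ‖f' x - f' y‖ ≤ L * ‖x - y‖) (v x : E) :
    f x ≤ f v + f' v (x - v) + L / 2 * ‖x - v‖ ^ 2 := by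
  set u := x - v
  let φ : ℝ → ℝ := fun t => f (v + t • u) - t * f' v u - L / 2 * t ^ 2 * ‖u‖ ^ 2
  have hφ : ∀ t, HasDerivAt φ (f' (v + t • u) u - f' v u - L * t * ‖u‖ ^ 2) t := by
    intro t
    have hline : HasDerivAt (fun t : ℝ => v + t • u) u t := by
      simpa using ((hasDerivAt_id t).smul_const u).const_add v
    refine ((((hf _).comp_hasDerivAt t hline).sub ((hasDerivAt_id t).mul_const (f' v u))).sub
      (((hasDerivAt_pow 2 t).const_mul (L / 2)).mul_const (‖u‖ ^ 2))).congr_deriv ?_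
    push_cast; ring
  have hφ' : ∀ t ∈ interior (Set.Ici (0 : ℝ)),
      f' (v + t • u) u - f' v u - L * t * ‖u‖ ^ 2 ≤ 0 := by
    intro t ht
    rw [interior_Ici] at ht
    have hinc : (f' (v + t • u) - f' v) u ≤ L * t * ‖u‖ ^ 2 :=
      calc (f' (v + t • u) - f' v) u ≤ ‖f' (v + t • u) - f' v‖ * ‖u‖ :=
            (le_abs_self _).trans ((f' (v + t • u) - f' v).le_opNorm u)
        _ ≤ L * ‖t • u‖ * ‖u‖ := by
            gcongr; simpa using hlip (v + t • u) v
        _ = L * t * ‖u‖ ^ 2 := by rw [norm_smul, Real.norm_of_nonneg ht.le]; ring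
    simp only [sub_apply] at hinc
    linarith
  have hanti : AntitoneOn φ (Set.Ici 0) :=
    antitoneOn_of_hasDerivWithinAt_nonpos (convex_Ici 0)
      (fun t _ => (hφ t).continuousAt.continuousWithinAt)
      (fun t _ => (hφ t).hasDerivWithinAt) hφ'
  have h01 : φ 1 ≤ φ 0 := hanti (Set.mem_Ici.2 le_rfl) (Set.mem_Ici.2 zero_le_one) zero_le_one
  simp only [φ, one_smul, zero_smul, add_zero, u, add_sub_cancel] at h01
  linarith

theorem le_add_inner_add_sq_of_lipschitz_gradient {E : Type*} [NormedAddCommGroup E]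
    [InnerProductSpace ℝ E] [CompleteSpace E] {f : E → ℝ} {f' : E → E} {L : ℝ}
    (hf : ∀ x, HasGradientAt f (f' x) x) (hlip : ∀ x y, ‖f' x - f' y‖ ≤ L * ‖x - y‖) (v x : E) :
    f x ≤ f v + ⟪f' v, x - v⟫_ℝ + L / 2 * ‖x - v‖ ^ 2 :=
  le_add_fderiv_add_sq_of_lipschitz (f' := fun x => toDual ℝ E (f' x)) hf
    (fun x y => by rw [← map_sub, LinearIsometryEquiv.norm_map]; exact hlip x y) v x

section Prox

variable {E : Type*} [NormedAddCommGroup E] [InnerProductSpace ℝ E]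

noncomputable def proxObjective (g : E → ℝ) (η : ℝ) (z w : E) : ℝ :=
  1 / 2 * ‖w - z‖ ^ 2 + η * g w

theorem proxObjective_sub_proxObjective_of_forward_step (g : E → ℝ) (η : ℝ) (v d w : E) :
    proxObjective g η (v - η • d) w - proxObjective g η (v - η • d) v =
      1 / 2 * ‖w - v‖ ^ 2 + η * ⟪d, w - v⟫_ℝ + η * (g w - g v) := by
  have hw : w - (v - η • d) = (w - v) + η • d := by abel
  have hv : v - (v - η • d) = η • d := by abel
  simp only [proxObjective, hw, hv, norm_add_sq_real, real_inner_smul_right, real_inner_comm d]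
  ring

theorem inner_add_le_of_proxObjective_le {g : E → ℝ} {η ε : ℝ} (hη : 0 < η) {v d w : E}
    (h : proxObjective g η (v - η • d) w ≤ proxObjective g η (v - η • d) v + ε) :
    ⟪d, w - v⟫_ℝ + g w ≤ g v - 1 / η / 2 * ‖w - v‖ ^ 2 + 1 / η * ε := by
  have hdecr := proxObjective_sub_proxObjective_of_forward_step g η v d w
  have hscaled : 1 / 2 * ‖w - v‖ ^ 2 + η * ⟪d, w - v⟫_ℝ + η * (g w - g v) ≤ ε := by linarith
  rw [← mul_le_mul_iff_right₀ hη]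
  field_simp
  linarith

end Prox

theorem inexact_prox_sufficient_decrease_general
    {E : Type*} [NormedAddCommGroup E] [InnerProductSpace ℝ E] [FiniteDimensional ℝ E]
    (f g F : E → ℝ) (f' : E → E) (L η ρ : ℝ)
    (hf : ∀ x, HasGradientAt f (f' x) x)
    (hlip : ∀ x y, ‖f' x - f' y‖ ≤ L * ‖x - y‖)
    (hF : ∀ x, F x = f x + g x)
    (hη : 0 < η) (hρ : ρ = 1 / η)
    (v xhat xp : E) (ε : ℝ)
    (hxhat : ∀ w : E, (1 / 2) * ‖xhat - (v - η • f' v)‖ ^ 2 + η * g xhat ≤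
      (1 / 2) * ‖w - (v - η • f' v)‖ ^ 2 + η * g w)
    (hxp : (1 / 2) * ‖xp - (v - η • f' v)‖ ^ 2 + η * g xp ≤
      ((1 / 2) * ‖xhat - (v - η • f' v)‖ ^ 2 + η * g xhat) + ε) :
    F xp ≤ F v - ((ρ - L) / 2) * ‖xp - v‖ ^ 2 + ρ * ε := by
  have hdescent := le_add_inner_add_sq_of_lipschitz_gradient hf hlip v xp
  have hprox : proxObjective g η (v - η • f' v) xp ≤ proxObjective g η (v - η • f' v) v + ε :=
    hxp.trans (add_le_add_left (hxhat v) ε)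
  have hgstep := inner_add_le_of_proxObjective_le hη hprox
  rw [hF, hF, hρ]
  linarith

/-- Proposition 3: sufficient decrease for an ε-inexact proximal step.
If `x̂` minimizes `h(w) = (1/2)‖w - z‖² + η g(w)` with `z = v - η • ∇f v`, and
`h x⁺ ≤ h x̂ + ε`, then `F x⁺ ≤ F v - ((ρ - L)/2)‖x⁺ - v‖² + ρ ε`. -/
theorem inexact_prox_sufficient_decrease
    {E : Type*} [NormedAddCommGroup E] [InnerProductSpace ℝ E] [FiniteDimensional ℝ E]
    (f g F : E → ℝ) (f' : E → E) (L η ρ : ℝ)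
    (hL : 0 < L)
    (hf : ∀ x, HasGradientAt f (f' x) x)
    (hlip : ∀ x y, ‖f' x - f' y‖ ≤ L * ‖x - y‖)
    (hg : LowerSemicontinuous g)
    (hF : ∀ x, F x = f x + g x)
    (hη : 0 < η) (hηL : η < 1 / L) (hρ : ρ = 1 / η)
    (v xhat xp : E) (ε : ℝ) (hε : 0 ≤ ε)
    (hxhat : ∀ w : E, (1 / 2) * ‖xhat - (v - η • f' v)‖ ^ 2 + η * g xhat ≤
      (1 / 2) * ‖w - (v - η • f' v)‖ ^ 2 + η * g w)
    (hxp : (1 / 2) * ‖xp - (v - η • f' v)‖ ^ 2 + η * g xp ≤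
      ((1 / 2) * ‖xhat - (v - η • f' v)‖ ^ 2 + η * g xhat) + ε) :
    F xp ≤ F v - ((ρ - L) / 2) * ‖xp - v‖ ^ 2 + ρ * ε :=
  inexact_prox_sufficient_decrease_general f g F f' L η ρ hf hlip hF hη hρ v xhat xp ε hxhat hxp
end

section
/- Suppose that in Algorithm niAPG every step satisfies the ε-inexact sufficient-decrease inequality F(x_{k+1}) ≤ min(F(y_k), Δ_k) − ((ρ − L)/2)·‖x_{k+1} − v_k‖² + ρ·ε_k for given nonnegative reals ε_k. Then for every k ≥ 1: Δ_{k+q+1} ≤ Δ_k − ((ρ − L)/2)·min_{t = k,…,k+q} ‖x_{t+1} − v_t‖² + ρ·∑_{t=k}^{k+q} ε_t. -/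
/-!
Each inexact step pushes `F x_{k+1}` at most `ρ ε_k` above `Δ_k`, so the window maximum `Δ` can
grow by at most `ρ ε_s` per step, and over `k, …, s` by at most the partial sum of `ρ ε`. The
window defining `Δ_{k+q+1}` consists of the iterates `x_{s+1}`, `s = k, …, k+q`, each of which
additionally lies `((ρ - L)/2)‖x_{s+1} - v_s‖²` below `Δ_s`; bounding that square from below by
the minimum over the window gives the claim.
-/

open Finset

def IsWindowMax (a : ℕ → ℝ) (q : ℕ) (Δ : ℕ → ℝ) : Prop :=
  ∀ k, ∀ hk : 1 ≤ k,
    Δ k = (Icc (max 1 (k - q)) k).sup' (nonempty_Icc.mpr (max_le hk (k.sub_le q))) a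

theorem le_add_sum_Ico_of_succ_le {D δ : ℕ → ℝ} {m : ℕ}
    (h : ∀ s, m ≤ s → D (s + 1) ≤ D s + δ s) {k : ℕ} (hk : m ≤ k) :
    ∀ n, k ≤ n → D n ≤ D k + ∑ t ∈ Ico k n, δ t := by
  refine Nat.le_induction (by simp) fun n hkn ih => ?_
  rw [sum_Ico_succ_top hkn]
  linarith [h n (hk.trans hkn)]

namespace IsWindowMax

variable {a Δ : ℕ → ℝ} {q : ℕ}

theorem le (hΔ : IsWindowMax a q Δ) {k t : ℕ} (hk : 1 ≤ k) (ht : t ∈ Icc (max 1 (k - q)) k) :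
    a t ≤ Δ k := by
  rw [hΔ k hk]
  exact le_sup' a ht

theorem succ_le (hΔ : IsWindowMax a q Δ) {s : ℕ} (hs : 1 ≤ s) {δ : ℝ} (hδ : 0 ≤ δ)
    (ha : a (s + 1) ≤ Δ s + δ) : Δ (s + 1) ≤ Δ s + δ := by
  rw [hΔ (s + 1) (by omega)]
  refine sup'_le _ _ fun t ht => ?_
  obtain ⟨ht₁, ht₂⟩ := mem_Icc.mp ht
  rcases ht₂.eq_or_lt with rfl | hlt
  · exact ha
  · have ht' : t ∈ Icc (max 1 (s - q)) s := mem_Icc.mpr ⟨by omega, by omega⟩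
    linarith [hΔ.le hs ht']

theorem le_sub_mul_inf'_add_sum (hΔ : IsWindowMax a q Δ) {c : ℝ} {d δ : ℕ → ℝ}
    (hc : 0 ≤ c) (hd : ∀ s, 0 ≤ d s) (hδ : ∀ s, 0 ≤ δ s)
    (ha : ∀ s, 1 ≤ s → a (s + 1) ≤ Δ s - c * d s + δ s) {k : ℕ} (hk : 1 ≤ k) :
    Δ (k + q + 1) ≤ Δ k - c * (Icc k (k + q)).inf' (nonempty_Icc.mpr (k.le_add_right q)) d
      + ∑ t ∈ Icc k (k + q), δ t := by
  have hstep : ∀ s, 1 ≤ s → Δ (s + 1) ≤ Δ s + δ s := fun s hs =>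
    hΔ.succ_le hs (hδ s) (by nlinarith [ha s hs, mul_nonneg hc (hd s)])
  rw [hΔ (k + q + 1) (by omega)]
  refine sup'_le _ _ fun t ht => ?_
  obtain ⟨s, rfl⟩ : ∃ s, t = s + 1 := ⟨t - 1, by rw [mem_Icc] at ht; omega⟩
  have hs : s ∈ Icc k (k + q) := by rw [mem_Icc] at ht ⊢; omega
  have hks : k ≤ s := (mem_Icc.mp hs).1
  have hΔs : Δ s ≤ Δ k + ∑ t ∈ Ico k s, δ t := le_add_sum_Ico_of_succ_le hstep hk s hks
  have hinf : c * (Icc k (k + q)).inf' _ d ≤ c * d s :=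
    mul_le_mul_of_nonneg_left (inf'_le d hs) hc
  have hsum : ∑ t ∈ Ico k s, δ t + δ s ≤ ∑ t ∈ Icc k (k + q), δ t := by
    rw [← sum_Ico_succ_top hks, Ico_add_one_right_eq_Icc]
    exact sum_le_sum_of_subset_of_nonneg (Icc_subset_Icc_right (mem_Icc.mp hs).2)
      fun t _ _ => hδ t
  linarith [ha s (by omega)]

end IsWindowMax

/-- Proposition 8: decrease of `Δ` over a window, inexact proximal steps.
If every niAPG step satisfies the ε-inexact sufficient-decrease inequality
`F x_{k+1} ≤ min (F y_k) Δ_k - ((ρ - L)/2)‖x_{k+1} - v_k‖² + ρ ε_k`, then for every `k ≥ 1`,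
`Δ_{k+q+1} ≤ Δ_k - ((ρ - L)/2) min_{t=k,…,k+q} ‖x_{t+1} - v_t‖² + ρ ∑_{t=k}^{k+q} ε_t`. -/
theorem niAPG_inexact_Delta_decrease
    {E : Type*} [NormedAddCommGroup E]
    (F : E → ℝ) (L η ρ : ℝ)
    (hL : 0 < L)
    (hη : 0 < η) (hηL : η < 1 / L) (hρ : ρ = 1 / η)
    (q : ℕ) (x y v : ℕ → E) (Δ : ℕ → ℝ) (ε : ℕ → ℝ)
    (hεnn : ∀ k, 0 ≤ ε k)
    (hΔ : ∀ k, ∀ hk : 1 ≤ k, Δ k =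
      (Finset.Icc (max 1 (k - q)) k).sup' (Finset.nonempty_Icc.mpr (by omega))
        (fun t => F (x t)))
    (hdec : ∀ k, 1 ≤ k →
      F (x (k + 1)) ≤ min (F (y k)) (Δ k) - ((ρ - L) / 2) * ‖x (k + 1) - v k‖ ^ 2
        + ρ * ε k) :
    ∀ k, 1 ≤ k →
      Δ (k + q + 1) ≤ Δ k - ((ρ - L) / 2) *
          (Finset.Icc k (k + q)).inf' (Finset.nonempty_Icc.mpr (by omega))
            (fun t => ‖x (t + 1) - v t‖ ^ 2)
        + ρ * ∑ t ∈ Finset.Icc k (k + q), ε t := by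
  intro k hk
  have hLρ : L < ρ := hρ ▸ (lt_one_div hη hL).mp hηL
  have hρ₀ : 0 ≤ ρ := by linarith
  rw [mul_sum]
  refine IsWindowMax.le_sub_mul_inf'_add_sum hΔ (by linarith)
    (fun s => sq_nonneg _) (fun s => mul_nonneg hρ₀ (hεnn s))
    (fun s hs => ?_) hk
  linarith [hdec s hs, min_le_right (F (y s)) (Δ s)]
end
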